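/- Let X be a complete normed vector space, Ψ : [1,∞) → X, M ∈ ℕ, c ≥ 0, and ε₁,…,ε_M, η₁,…,η_M real numbers with η_i > 2ε_i ≥ 0 for every i. Assume that for all t₁, t₂ with 1 < t₁ ≤ t₂ one has ‖Ψ(t₂) − Ψ(t₁)‖ ≤ c · Σ_{i=1}^{M} t₂^{ε_i} / t₁^{η_i}. Then for all t₁, t₂ with 1 < t₁ ≤ t₂ one also has the t₂-independent bound ‖Ψ(t₂) − Ψ(t₁)‖ ≤ c · Σ_{i=1}^{M} t₁^{−(η_i − 2ε_i)} · (1 − t₁^{−(η_i − ε_i)})^{−1}. -/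
import Mathlib


/-- Quantitative telescoping bound from the proof of Theorem 2.2: the difference bound
`‖Ψ t₂ - Ψ t₁‖ ≤ c * ∑ i, t₂ ^ ε i / t₁ ^ η i` with `η i > 2 ε i ≥ 0` implies the
`t₂`-independent bound `‖Ψ t₂ - Ψ t₁‖ ≤ c * ∑ i, t₁ ^ (-(η i - 2 ε i)) * (1 - t₁ ^ (-(η i - ε i)))⁻¹`. -/
theorem telescopic_chain_bound {X : Type*} [NormedAddCommGroup X] [NormedSpace ℝ X]
    [CompleteSpace X] (Ψ : ℝ → X) (M : ℕ) (c : ℝ) (hc : 0 ≤ c)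
    (ε η : Fin M → ℝ) (hε : ∀ i, 0 ≤ ε i) (hη : ∀ i, 2 * ε i < η i)
    (hdiff : ∀ t₁ t₂ : ℝ, 1 < t₁ → t₁ ≤ t₂ →
      ‖Ψ t₂ - Ψ t₁‖ ≤ c * ∑ i, t₂ ^ ε i / t₁ ^ η i) :
    ∀ t₁ t₂ : ℝ, 1 < t₁ → t₁ ≤ t₂ →
      ‖Ψ t₂ - Ψ t₁‖ ≤ c * ∑ i, t₁ ^ (-(η i - 2 * ε i)) * (1 - t₁ ^ (-(η i - ε i)))⁻¹ := by
  intro t₁ t₂ ht₁ ht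
  have ht₀ : (0:ℝ) < t₁ := by linarith
  -- single-step bound: if t₁^(n+1) ≤ s ≤ t₁^(n+2) then hdiff applied at base t₁^(m+1)
  have step : ∀ (m n : ℕ) (s : ℝ), t₁ ^ (m+1) ≤ s → s ≤ t₁ ^ (n+2) →
      ‖Ψ s - Ψ (t₁ ^ (m+1))‖ ≤ c * ∑ i, t₁ ^ ((n+2) * ε i - (m+1) * η i) := by
    intro m n s hs1 hs2
    have h1 : (1:ℝ) < t₁ ^ (m+1) := one_lt_pow₀ ht₁ (Nat.succ_ne_zero m)
    have hs0 : (0:ℝ) ≤ s := le_trans (by positivity) hs1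
    refine (hdiff _ s h1 hs1).trans ?_
    refine mul_le_mul_of_nonneg_left (Finset.sum_le_sum fun i _ => ?_) hc
    have hbase : ((t₁ ^ (m+1) : ℝ)) ^ η i = t₁ ^ ((m+1) * η i) := by
      rw [← Real.rpow_natCast t₁ (m+1), ← Real.rpow_mul ht₀.le]
      norm_num
    have htop : s ^ ε i ≤ t₁ ^ ((n+2) * ε i) := by
      have : s ^ ε i ≤ ((t₁ ^ (n+2) : ℝ)) ^ ε i :=
        Real.rpow_le_rpow hs0 hs2 (hε i)
      refine this.trans_eq ?_
      rw [← Real.rpow_natCast t₁ (n+2), ← Real.rpow_mul ht₀.le]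
      norm_num
    rw [hbase, div_le_iff₀ (by positivity), ← Real.rpow_add ht₀]
    rw [sub_add_cancel] at *
    exact htop
  -- telescoping induction
  have key : ∀ n : ℕ, ∀ s : ℝ, t₁ ^ (n+1) ≤ s → s ≤ t₁ ^ (n+2) →
      ‖Ψ s - Ψ t₁‖ ≤ c * ∑ i, ∑ k ∈ Finset.range (n+1),
        t₁ ^ ((2 * ε i - η i) + k * (ε i - η i)) := by
    intro n
    induction n with
    | zero =>
      intro s hs1 hs2
      have h := step 0 0 s (by simpa using hs1) hs2
      rw [show (0:ℕ)+1 = 1 from rfl, pow_one] at h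
      refine h.trans (le_of_eq ?_)
      congr 1
      refine Finset.sum_congr rfl fun i _ => ?_
      rw [Finset.sum_range_one]
      congr 1
      push_cast
      ring
    | succ n ih =>
      intro s hs1 hs2
      have hmid1 : t₁ ^ (n+1) ≤ t₁ ^ (n+2) := pow_le_pow_right₀ ht₁.le (by omega)
      have h2 : ‖Ψ (t₁ ^ (n+2)) - Ψ t₁‖ ≤ c * ∑ i, ∑ k ∈ Finset.range (n+1),
          t₁ ^ ((2 * ε i - η i) + k * (ε i - η i)) := ih _ hmid1 le_rfl
      have h1 : ‖Ψ s - Ψ (t₁ ^ (n+2))‖ ≤ c * ∑ i, t₁ ^ ((n+3) * ε i - (n+2) * η i) := by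
        have := step (n+1) (n+1) s hs1 hs2
        convert this using 4 <;> push_cast <;> ring
      calc ‖Ψ s - Ψ t₁‖ ≤ ‖Ψ s - Ψ (t₁ ^ (n+2))‖ + ‖Ψ (t₁ ^ (n+2)) - Ψ t₁‖ :=
            norm_sub_le_norm_sub_add_norm_sub _ _ _
        _ ≤ c * ∑ i, t₁ ^ ((n+3) * ε i - (n+2) * η i)
            + c * ∑ i, ∑ k ∈ Finset.range (n+1), t₁ ^ ((2 * ε i - η i) + k * (ε i - η i)) :=
            add_le_add h1 h2
        _ = c * ∑ i, ∑ k ∈ Finset.range (n+2),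
            t₁ ^ ((2 * ε i - η i) + k * (ε i - η i)) := by
            rw [← mul_add, ← Finset.sum_add_distrib]
            congr 1
            refine Finset.sum_congr rfl fun i _ => ?_
            conv_rhs => rw [Finset.sum_range_succ]
            rw [add_comm]
            congr 2
            push_cast
            ring
  -- find n with t₁^(n+1) ≤ t₂ < t₁^(n+2)
  have hex : ∃ n : ℕ, t₂ < t₁ ^ (n+1) := by
    obtain ⟨N, hN⟩ := pow_unbounded_of_one_lt t₂ ht₁
    exact ⟨N, hN.trans_le (pow_le_pow_right₀ ht₁.le (by omega))⟩
  have hlt : t₂ < t₁ ^ (Nat.find hex + 1) := Nat.find_spec hex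
  have hn1 : 1 ≤ Nat.find hex := by
    rcases Nat.eq_zero_or_pos (Nat.find hex) with h | h
    · rw [h, pow_one] at hlt; linarith
    · exact h
  obtain ⟨m, hm⟩ : ∃ m, Nat.find hex = m + 1 := ⟨Nat.find hex - 1, by omega⟩
  rw [hm] at hlt
  have hge : t₁ ^ (m+1) ≤ t₂ := by
    have := Nat.find_min hex (m := m) (by omega)
    push_neg at this
    exact this
  have hk := key m t₂ hge (by linarith [hlt])
  refine hk.trans ?_
  refine mul_le_mul_of_nonneg_left (Finset.sum_le_sum fun i _ => ?_) hc
  -- geometric series bound per i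
  set r := t₁ ^ (ε i - η i) with hr
  have hb : ε i - η i < 0 := by have := hη i; have := hε i; linarith
  have hr0 : 0 < r := Real.rpow_pos_of_pos ht₀ _
  have hr1 : r < 1 := Real.rpow_lt_one_of_one_lt_of_neg ht₁ hb
  have hsum : ∑ k ∈ Finset.range (m+1), t₁ ^ ((2 * ε i - η i) + k * (ε i - η i))
      = t₁ ^ (2 * ε i - η i) * ∑ k ∈ Finset.range (m+1), r ^ k := by
    rw [Finset.mul_sum]
    refine Finset.sum_congr rfl fun k _ => ?_
    rw [Real.rpow_add ht₀, hr, ← Real.rpow_natCast (t₁ ^ (ε i - η i)) k,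
      ← Real.rpow_mul ht₀.le, mul_comm (ε i - η i)]
  rw [hsum]
  have hgeo : ∑ k ∈ Finset.range (m+1), r ^ k ≤ (1 - r)⁻¹ :=
    sum_le_hasSum _ (fun k _ => pow_nonneg hr0.le k)
      (hasSum_geometric_of_lt_one hr0.le hr1)
  have h2 : t₁ ^ (-(η i - 2 * ε i)) = t₁ ^ (2 * ε i - η i) := by ring_nf
  have h3 : (1 - t₁ ^ (-(η i - ε i)))⁻¹ = (1 - r)⁻¹ := by rw [hr]; ring_nf
  rw [h2, h3]
  exact mul_le_mul_of_nonneg_left hgeo (Real.rpow_pos_of_pos ht₀ _).le
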